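/- Suppose c satisfies (A0), (A1), (A2), and fix θ ∈ [0,1] and a c-segment {y_θ} with respect to x_m lying in Λ. Let q_θ = −∇_yc(x_m, y_θ), ẏ_θ = (d/dθ)y_θ, and W_θ = {w ∈ ℝⁿ : ⟨w, ẏ_θ⟩ = 0}; for w ∈ W_θ with q_θ + w ∈ dom(c*-Exp_{y_θ}), let x_w = c*-Exp_{y_θ}(q_θ + w) (so x_w ∈ S_θ). Let ṗ_θ(x) = (d/dθ)(−∇ₓc(x, y_θ)). Then for every direction η ∈ W_θ, ⟨ṗ_θ(x_w), ∂_η x_w⟩ = 0, where ∂_η x_w denotes the directional derivative of w ↦ x_w in direction η; that is, ṗ_θ(x_w) is orthogonal to the level hypersurface S_θ at x_w. In particular, S_θ is orthogonal to p₁ − p₀ at x_m for every θ. -/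

import Mathlib

open scoped RealInnerProductSpace
open Filter Topology Set

noncomputable section

variable {n : ℕ}

local notation "E" => EuclideanSpace ℝ (Fin n)

/-- `-∇ₓ c(x,y)`, the negative gradient of `x' ↦ c(x',y)` at `x`. -/
def negGradX (c : E → E → ℝ) (x y : E) : E :=
  -(gradient (fun x' => c x' y) x)

/-- `-∇_y c(x,y)`, the negative gradient of `y' ↦ c(x,y')` at `y`. -/
def negGradY (c : E → E → ℝ) (x y : E) : E :=
  -(gradient (fun y' => c x y') y)

/-- The swapped cost `c*(y,x) = c(x,y)`. -/
def cStar (c : E → E → ℝ) : E → E → ℝ := fun y x => c x y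

/-- The domain of the `c`-exponential map at `x`: `{-∇ₓ c(x,y) : y ∈ Λ}`. -/
def cExpDom (c : E → E → ℝ) (Λ : Set E) (x : E) : Set E :=
  (fun y => negGradX c x y) '' Λ

/-- The `c`-exponential map: `cExp c Λ x p` is the point `y ∈ Λ` with `p = -∇ₓ c(x,y)`
(when it exists and is unique). -/
def cExp (c : E → E → ℝ) (Λ : Set E) (x p : E) : E :=
  Function.invFunOn (fun y => negGradX c x y) Λ p

/-- Condition (A0): the cost extends to a `C⁴` function on `cl Ω × cl Λ`. -/
def A0 (c : E → E → ℝ) (Ω Λ : Set E) : Prop :=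
  ContDiffOn ℝ 4 (fun q : E × E => c q.1 q.2) (closure Ω ×ˢ closure Λ)

/-- Condition (A1): injectivity of `y ↦ -∇ₓ c(x,y)` on `cl Λ` and of
`x ↦ -∇_y c(x,y)` on `cl Ω`. -/
def A1 (c : E → E → ℝ) (Ω Λ : Set E) : Prop :=
  (∀ x ∈ Ω, Set.InjOn (fun y => negGradX c x y) (closure Λ)) ∧
  (∀ y ∈ Λ, Set.InjOn (fun x => negGradY c x y) (closure Ω))

/-- Condition (A2): the mixed second derivative `D²ₓᵧ c(x,y)`, as a linear map, is
invertible for all `(x,y) ∈ cl Ω × cl Λ`. -/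
def A2 (c : E → E → ℝ) (Ω Λ : Set E) : Prop :=
  ∀ x ∈ closure Ω, ∀ y ∈ closure Λ,
    Function.Bijective (fderiv ℝ (fun y' => negGradX c x y') y)

/-- The `c`-sectional curvature
`𝔖_c(x,y)(η,ξ) = (d²/dt²)|₀ [-D²ₓₓ c](x, cExpₓ(p + tξ))(η,η)` with `p = -∇ₓ c(x,y)`. -/
def cSectional (c : E → E → ℝ) (Λ : Set E) (x y η ξ : E) : ℝ :=
  deriv (deriv (fun t : ℝ =>
    -(iteratedFDeriv ℝ 2
        (fun x' => c x' (cExp c Λ x (negGradX c x y + t • ξ))) x ![η, η]))) 0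

/-- Condition (A3W): nonnegative `c`-sectional curvature in orthogonal directions. -/
def A3W (c : E → E → ℝ) (Ω Λ : Set E) : Prop :=
  ∀ x ∈ Ω, ∀ y ∈ Λ, ∀ η ξ : E, ⟪η, ξ⟫ = 0 → 0 ≤ cSectional c Λ x y η ξ

/-- Condition (A3S): uniformly positive `c`-sectional curvature in orthogonal directions. -/
def A3S (c : E → E → ℝ) (Ω Λ : Set E) : Prop :=
  ∃ C₀ > (0:ℝ), ∀ x ∈ Ω, ∀ y ∈ Λ, ∀ η ξ : E, ⟪η, ξ⟫ = 0 →
    C₀ * ‖η‖ ^ 2 * ‖ξ‖ ^ 2 ≤ cSectional c Λ x y η ξ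

/-- `Λ` is `c`-convex with respect to `Ω`: `(cExpₓ)⁻¹(Λ)` is convex for every `x ∈ Ω`. -/
def CConvexTarget (c : E → E → ℝ) (Ω Λ : Set E) : Prop :=
  ∀ x ∈ Ω, Convex ℝ (cExpDom c Λ x)

/-- `Ω` is `c*`-convex with respect to `Λ`: `(c*Exp_y)⁻¹(Ω)` is convex for every `y ∈ Λ`. -/
def CStarConvexSource (c : E → E → ℝ) (Ω Λ : Set E) : Prop :=
  ∀ y ∈ Λ, Convex ℝ ((fun x => negGradY c x y) '' Ω)

/-- The `c`-Legendre transform `L^c v(x) = sup_{y ∈ Λ} (-c(x,y) - v(y))`. -/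
def cTransform (c : E → E → ℝ) (Λ : Set E) (v : E → EReal) (x : E) : EReal :=
  ⨆ y ∈ Λ, (((-(c x y) : ℝ) : EReal) - v y)

/-- `φ` is a `c`-convex function on `Ω` indexed by `Λ`. -/
def IsCConvexOn (c : E → E → ℝ) (Ω Λ : Set E) (φ : E → ℝ) : Prop :=
  ∃ v : E → EReal,
    (∀ x ∈ Ω, (φ x : EReal) = cTransform c Λ v x) ∧
    (∀ x ∈ Ω, ∃ y ∈ closure Λ, (φ x : EReal) + v y = ((-(c x y) : ℝ) : EReal))

/-- The `c*`-Legendre transform `L^{c*} φ(y) = sup_{x ∈ Ω} (-c(x,y) - φ(x))`. -/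
def cStarTransform (c : E → E → ℝ) (Ω : Set E) (φ : E → ℝ) (y : E) : EReal :=
  ⨆ x ∈ Ω, (((-(c x y) - φ x : ℝ)) : EReal)

/-- The contact set `G_φ(x) = {y ∈ cl Λ : φ(x) + L^{c*}φ(y) = -c(x,y)}`. -/
def contactSet (c : E → E → ℝ) (Ω Λ : Set E) (φ : E → ℝ) (x : E) : Set E :=
  {y ∈ closure Λ | (φ x : EReal) + cStarTransform c Ω φ y = ((-(c x y) : ℝ) : EReal)}

/-- The (local) subdifferential `∂φ(x)`:
`φ(z) ≥ φ(x) + ⟨p, z - x⟩ + o(‖z - x‖)` as `z → x` in `Ω`. -/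
def subdiff (Ω : Set E) (φ : E → ℝ) (x : E) : Set E :=
  {p : E | ∀ ε > (0:ℝ), ∀ᶠ z in 𝓝[Ω] x,
      φ x + ⟪p, z - x⟫ - ε * ‖z - x‖ ≤ φ z}

/-- The `c`-subdifferential `∂^c φ(x) = {-∇ₓ c(x,y) : y ∈ G_φ(x)}`. -/
def cSubdiff (c : E → E → ℝ) (Ω Λ : Set E) (φ : E → ℝ) (x : E) : Set E :=
  (fun y => negGradX c x y) '' contactSet c Ω Λ φ x

/-- The straight segment `p_θ = (1-θ) p₀ + θ p₁` with `pᵢ = -∇ₓ c(x_m, yᵢ)`. -/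
def pSeg (c : E → E → ℝ) (xm y₀ y₁ : E) (θ : ℝ) : E :=
  (1 - θ) • negGradX c xm y₀ + θ • negGradX c xm y₁

/-- The `c`-segment `y_θ = cExp_{x_m}(p_θ)` joining `y₀` to `y₁` with respect to `x_m`. -/
def ySeg (c : E → E → ℝ) (Λ : Set E) (xm y₀ y₁ : E) (θ : ℝ) : E :=
  cExp c Λ xm (pSeg c xm y₀ y₁ θ)

/-- The sliding mountain `f_θ(x) = -c(x, y_θ) + c(x_m, y_θ)`. -/
def slide (c : E → E → ℝ) (Λ : Set E) (xm y₀ y₁ : E) (θ : ℝ) (x : E) : ℝ :=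
  -(c x (ySeg c Λ xm y₀ y₁ θ)) + c xm (ySeg c Λ xm y₀ y₁ θ)

/-- The `c`-segment `[y₀,y₁]_{x_m}` lies in `Λ`:
each `p_θ`, `θ ∈ [0,1]`, is in the domain of `cExp_{x_m}`. -/
def segInTarget (c : E → E → ℝ) (Λ : Set E) (xm y₀ y₁ : E) : Prop :=
  ∀ θ ∈ Set.Icc (0:ℝ) 1, pSeg c xm y₀ y₁ θ ∈ cExpDom c Λ xm

/-- The level set `S_θ = {x ∈ Ω : (d/dθ) f_θ(x) = 0}`. -/
def Slevel (c : E → E → ℝ) (Ω Λ : Set E) (xm y₀ y₁ : E) (θ : ℝ) : Set E :=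
  {x ∈ Ω | deriv (fun θ' => slide c Λ xm y₀ y₁ θ' x) θ = 0}

/-- The super-level set `S⁺_θ = {x ∈ Ω : (d/dθ) f_θ(x) ≥ 0}`. -/
def Splus (c : E → E → ℝ) (Ω Λ : Set E) (xm y₀ y₁ : E) (θ : ℝ) : Set E :=
  {x ∈ Ω | 0 ≤ deriv (fun θ' => slide c Λ xm y₀ y₁ θ' x) θ}

/-!
Differentiating `p_θ = -∇ₓc(x_m, y_θ)` gives `A_{x_m} ẏ_θ = p₁ - p₀`, and more generally
`ṗ_θ(x) = A_x ẏ_θ`, where `A_x = D_y(-∇ₓc)(x, y_θ)`. The map `w ↦ x_w` inverts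
`x ↦ -∇_y c(x, y_θ)`, whose differential at `x` is the adjoint `A_xᵀ` by the symmetry of the
mixed second derivatives of `c`; hence `∂_η x_w = (A_xᵀ)⁻¹ η` and
`⟪ṗ_θ(x_w), ∂_η x_w⟫ = ⟪ẏ_θ, η⟫ = 0`. At `w = 0` we have `x_w = x_m` and `ṗ_θ(x_m) = p₁ - p₀`.
-/

open Function InnerProductSpace

section InverseFunction

variable {𝕜 : Type*} [NontriviallyNormedField 𝕜]
  {F G : Type*} [NormedAddCommGroup F] [NormedSpace 𝕜 F] [NormedAddCommGroup G] [NormedSpace 𝕜 G]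
  {f : F → G} {s : Set F} {a : F}

theorem ContDiffAt.eventually_differentiableAt {k : ℕ} (h : ContDiffAt 𝕜 k f a) (hk : k ≠ 0) :
    ∀ᶠ x in 𝓝 a, DifferentiableAt 𝕜 f x :=
  (h.eventually (by simp)).mono fun _ hx => hx.differentiableAt (by exact_mod_cast hk)

theorem HasStrictFDerivAt.invFunOn_eventuallyEq_localInverse [CompleteSpace F] {f' : F ≃L[𝕜] G}
    (hf : HasStrictFDerivAt f (f' : F →L[𝕜] G) a) (hs : s ∈ 𝓝 a) (hinj : InjOn f s) :
    invFunOn f s =ᶠ[𝓝 (f a)] hf.localInverse f f' a := by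
  have hmem : ∀ᶠ p in 𝓝 (f a), hf.localInverse f f' a p ∈ s :=
    hf.localInverse_continuousAt.preimage_mem_nhds (by rwa [hf.localInverse_apply_image])
  filter_upwards [hf.eventually_right_inverse, hmem] with p hright hp
  have himage : p ∈ f '' s := ⟨_, hp, hright⟩
  exact hinj (invFunOn_mem himage) hp ((invFunOn_eq himage).trans hright.symm)

theorem HasStrictFDerivAt.exists_hasFDerivAt_invFunOn [CompleteSpace F] [CompleteSpace G]
    {f' : F →L[𝕜] G}
    (hf : HasStrictFDerivAt f f' a) (hbij : Bijective f') (hs : s ∈ 𝓝 a) (hinj : InjOn f s) :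
    ∃ g' : G →L[𝕜] F, HasFDerivAt (invFunOn f s) g' (f a) ∧ RightInverse g' f' := by
  set e := ContinuousLinearEquiv.ofBijective f' (LinearMap.ker_eq_bot.mpr hbij.1)
    (LinearMap.range_eq_top.mpr hbij.2)
  have he : HasStrictFDerivAt f (e : F →L[𝕜] G) a := by
    rwa [ContinuousLinearEquiv.coe_ofBijective]
  exact ⟨e.symm, he.to_localInverse.hasFDerivAt.congr_of_eventuallyEq
    (he.invFunOn_eventuallyEq_localInverse hs hinj),
    ContinuousLinearEquiv.ofBijective_apply_symm_apply _ _ _⟩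

end InverseFunction

section PartialGradients

variable {c : EuclideanSpace ℝ (Fin n) → EuclideanSpace ℝ (Fin n) → ℝ}
  {x y : EuclideanSpace ℝ (Fin n)}

theorem negGradX_eq (h : DifferentiableAt ℝ (uncurry c) (x, y)) :
    negGradX c x y =
      -(toDual ℝ E).symm ((fderiv ℝ (uncurry c) (x, y)).comp (.inl ℝ E E)) := by
  have hslice : HasFDerivAt (fun x' => c x' y)
      ((fderiv ℝ (uncurry c) (x, y)).comp (.inl ℝ E E)) x :=
    (h.hasFDerivAt.comp x (hasFDerivAt_prodMk_left (𝕜 := ℝ) x y) :)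
  rw [negGradX, gradient, hslice.fderiv]

theorem negGradY_eq (h : DifferentiableAt ℝ (uncurry c) (x, y)) :
    negGradY c x y =
      -(toDual ℝ E).symm ((fderiv ℝ (uncurry c) (x, y)).comp (.inr ℝ E E)) := by
  have hslice : HasFDerivAt (fun y' => c x y')
      ((fderiv ℝ (uncurry c) (x, y)).comp (.inr ℝ E E)) y :=
    h.hasFDerivAt.comp y (hasFDerivAt_prodMk_right (𝕜 := ℝ) x y)
  rw [negGradY, gradient, hslice.fderiv]

theorem inner_negGradX (h : DifferentiableAt ℝ (uncurry c) (x, y)) (v : E) :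
    ⟪negGradX c x y, v⟫ = -fderiv ℝ (uncurry c) (x, y) (v, 0) := by
  simp [negGradX_eq h, inner_neg_left, toDual_symm_apply]

theorem inner_negGradY (h : DifferentiableAt ℝ (uncurry c) (x, y)) (u : E) :
    ⟪negGradY c x y, u⟫ = -fderiv ℝ (uncurry c) (x, y) (0, u) := by
  simp [negGradY_eq h, inner_neg_left, toDual_symm_apply]

theorem contDiffAt_negGradX (h : ContDiffAt ℝ 2 (uncurry c) (x, y)) :
    ContDiffAt ℝ 1 (fun y' => negGradX c x y') y := by
  have hslice : ContDiffAt ℝ 1 (fun y' => (fderiv ℝ (uncurry c) (x, y')).comp (.inl ℝ E E)) y :=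
    ((h.fderiv_right (m := 1) le_rfl).comp y (contDiffAt_const.prodMk contDiffAt_id)).clm_comp
      contDiffAt_const
  -- `toDual` is conjugate-linear, hence `ℝ`-linear over `ℝ` (definitionally)
  have hgrad := (((toDual ℝ E).symm.toContinuousLinearEquiv.toContinuousLinearMap :
    StrongDual ℝ E →L[ℝ] E).contDiff.comp_contDiffAt y hslice).neg
  refine hgrad.congr_of_eventuallyEq ?_
  filter_upwards [(continuousAt_const.prodMk continuousAt_id).eventually
    (h.eventually_differentiableAt two_ne_zero)] with y' hy' using negGradX_eq hy'

theorem contDiffAt_negGradY (h : ContDiffAt ℝ 2 (uncurry c) (x, y)) :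
    ContDiffAt ℝ 1 (fun x' => negGradY c x' y) x :=
  contDiffAt_negGradX (c := cStar c) (h.comp (y, x) (contDiffAt_snd.prodMk contDiffAt_fst))

theorem inner_fderiv_negGradX (h : ContDiffAt ℝ 2 (uncurry c) (x, y)) (u v : E) :
    ⟪fderiv ℝ (fun y' => negGradX c x y') y u, v⟫ =
      -fderiv ℝ (fderiv ℝ (uncurry c)) (x, y) (0, u) (v, 0) := by
  have hH : HasFDerivAt (fderiv ℝ (uncurry c)) (fderiv ℝ (fderiv ℝ (uncurry c)) (x, y)) (x, y) :=
    ((h.fderiv_right (m := 1) le_rfl).differentiableAt one_ne_zero).hasFDerivAt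
  have hslice := (hH.comp y (hasFDerivAt_prodMk_right (𝕜 := ℝ) x y)).clm_apply
    (hasFDerivAt_const ((v, 0) : E × E) y) |>.neg
  have hinner := (((contDiffAt_negGradX h).differentiableAt one_ne_zero).hasFDerivAt).inner ℝ
    (hasFDerivAt_const v y)
  have hev : (fun y' => ⟪negGradX c x y', v⟫) =ᶠ[𝓝 y]
      fun y' => -fderiv ℝ (uncurry c) (x, y') (v, 0) := by
    filter_upwards [(continuousAt_const.prodMk continuousAt_id).eventually
      (h.eventually_differentiableAt two_ne_zero)] with y' hy' using inner_negGradX hy' v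
  simpa using congrArg (· u) ((hinner.congr_of_eventuallyEq hev.symm).unique hslice)

theorem inner_fderiv_negGradY (h : ContDiffAt ℝ 2 (uncurry c) (x, y)) (v u : E) :
    ⟪fderiv ℝ (fun x' => negGradY c x' y) x v, u⟫ =
      -fderiv ℝ (fderiv ℝ (uncurry c)) (x, y) (v, 0) (0, u) := by
  have hH : HasFDerivAt (fderiv ℝ (uncurry c)) (fderiv ℝ (fderiv ℝ (uncurry c)) (x, y)) (x, y) :=
    ((h.fderiv_right (m := 1) le_rfl).differentiableAt one_ne_zero).hasFDerivAt
  have hslice := (hH.comp x (hasFDerivAt_prodMk_left (𝕜 := ℝ) x y)).clm_apply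
    (hasFDerivAt_const ((0, u) : E × E) x) |>.neg
  have hinner := (((contDiffAt_negGradY h).differentiableAt one_ne_zero).hasFDerivAt).inner ℝ
    (hasFDerivAt_const u x)
  have hev : (fun x' => ⟪negGradY c x' y, u⟫) =ᶠ[𝓝 x]
      fun x' => -fderiv ℝ (uncurry c) (x', y) (0, u) := by
    filter_upwards [(continuousAt_id.prodMk continuousAt_const).eventually
      (h.eventually_differentiableAt two_ne_zero)] with x' hx' using inner_negGradY hx' u
  simpa using congrArg (· v) ((hinner.congr_of_eventuallyEq hev.symm).unique hslice)

theorem fderiv_negGradY_eq_adjoint (h : ContDiffAt ℝ 2 (uncurry c) (x, y)) :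
    fderiv ℝ (fun x' => negGradY c x' y) x =
      ContinuousLinearMap.adjoint (fderiv ℝ (fun y' => negGradX c x y') y) := by
  refine (ContinuousLinearMap.eq_adjoint_iff _ _).mpr fun v u => ?_
  rw [inner_fderiv_negGradY h, real_inner_comm, inner_fderiv_negGradX h,
    (h.isSymmSndFDerivAt (by simp)).eq]

theorem bijective_fderiv_negGradY (h : ContDiffAt ℝ 2 (uncurry c) (x, y))
    (hA : Bijective (fderiv ℝ (fun y' => negGradX c x y') y)) :
    Bijective (fderiv ℝ (fun x' => negGradY c x' y) x) := by
  rwa [fderiv_negGradY_eq_adjoint h, ← ContinuousLinearMap.star_eq_adjoint,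
    ← ContinuousLinearMap.isUnit_iff_bijective, isUnit_star,
    ContinuousLinearMap.isUnit_iff_bijective]

end PartialGradients

section CExponential

variable {c : EuclideanSpace ℝ (Fin n) → EuclideanSpace ℝ (Fin n) → ℝ}
  {Ω Λ : Set (EuclideanSpace ℝ (Fin n))} {x y p q : EuclideanSpace ℝ (Fin n)}

theorem A0.contDiffAt (h0 : A0 c Ω Λ) (hΩ : IsOpen Ω) (hΛ : IsOpen Λ) (hx : x ∈ Ω) (hy : y ∈ Λ) :
    ContDiffAt ℝ 2 (uncurry c) (x, y) :=
  ((h0.mono (prod_mono subset_closure subset_closure)).contDiffAt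
    ((hΩ.prod hΛ).mem_nhds ⟨hx, hy⟩)).of_le (by norm_num)

theorem cExp_mem (hp : p ∈ cExpDom c Λ x) : cExp c Λ x p ∈ Λ :=
  invFunOn_mem hp

theorem negGradX_cExp (hp : p ∈ cExpDom c Λ x) : negGradX c x (cExp c Λ x p) = p :=
  invFunOn_eq hp

theorem cExp_negGradX (hinj : InjOn (fun y' => negGradX c x y') Λ) (hy : y ∈ Λ) :
    cExp c Λ x (negGradX c x y) = y :=
  hinj.leftInvOn_invFunOn hy

theorem exists_hasFDerivAt_cExp (hΛ : IsOpen Λ) (hinj : InjOn (fun y' => negGradX c x y') Λ)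
    (hp : p ∈ cExpDom c Λ x)
    (hC : ContDiffAt ℝ 1 (fun y' => negGradX c x y') (cExp c Λ x p))
    (hA : Bijective (fderiv ℝ (fun y' => negGradX c x y') (cExp c Λ x p))) :
    ∃ L : E →L[ℝ] E,
      HasFDerivAt (cExp c Λ x) L p ∧
        RightInverse L (fderiv ℝ (fun y' => negGradX c x y') (cExp c Λ x p)) := by
  have := (hC.hasStrictFDerivAt one_ne_zero).exists_hasFDerivAt_invFunOn hA
    (hΛ.mem_nhds (cExp_mem hp)) hinj
  rwa [negGradX_cExp hp] at this

theorem exists_hasFDerivAt_cExp_cStar (hΩ : IsOpen Ω)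
    (hinj : InjOn (fun x' => negGradY c x' y) Ω)
    (hq : q ∈ cExpDom (cStar c) Ω y)
    (hC : ContDiffAt ℝ 2 (uncurry c) (cExp (cStar c) Ω y q, y))
    (hA : Bijective (fderiv ℝ (fun y' => negGradX c (cExp (cStar c) Ω y q) y') y)) :
    ∃ L : E →L[ℝ] E,
      HasFDerivAt (cExp (cStar c) Ω y) L q ∧
        ∀ ξ η, ⟪fderiv ℝ (fun y' => negGradX c (cExp (cStar c) Ω y q) y') y ξ, L η⟫ = ⟪ξ, η⟫ := by
  obtain ⟨L, hL, hDL⟩ := exists_hasFDerivAt_cExp (c := cStar c) hΩ hinj hq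
    (contDiffAt_negGradY hC) (bijective_fderiv_negGradY hC hA)
  refine ⟨L, hL, fun ξ η => ?_⟩
  rw [← ContinuousLinearMap.adjoint_inner_right, ← fderiv_negGradY_eq_adjoint hC]
  exact congrArg _ (hDL η)

end CExponential

section CSegment

variable {c : EuclideanSpace ℝ (Fin n) → EuclideanSpace ℝ (Fin n) → ℝ}
  {Λ : Set (EuclideanSpace ℝ (Fin n))} {xm y₀ y₁ : EuclideanSpace ℝ (Fin n)} {θ : ℝ}

theorem hasDerivAt_pSeg :
    HasDerivAt (pSeg c xm y₀ y₁) (negGradX c xm y₁ - negGradX c xm y₀) θ := by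
  have hline : pSeg c xm y₀ y₁ =
      fun t => negGradX c xm y₀ + t • (negGradX c xm y₁ - negGradX c xm y₀) := by
    funext t
    simp only [pSeg]
    module
  rw [hline]
  simpa using ((hasDerivAt_id θ).smul_const _).const_add (negGradX c xm y₀)

theorem exists_hasDerivAt_ySeg (hΛ : IsOpen Λ) (hinj : InjOn (fun y' => negGradX c xm y') Λ)
    (hp : pSeg c xm y₀ y₁ θ ∈ cExpDom c Λ xm)
    (hC : ContDiffAt ℝ 1 (fun y' => negGradX c xm y') (ySeg c Λ xm y₀ y₁ θ))
    (hA : Bijective (fderiv ℝ (fun y' => negGradX c xm y') (ySeg c Λ xm y₀ y₁ θ))) :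
    ∃ v, HasDerivAt (ySeg c Λ xm y₀ y₁) v θ ∧
      fderiv ℝ (fun y' => negGradX c xm y') (ySeg c Λ xm y₀ y₁ θ) v =
        negGradX c xm y₁ - negGradX c xm y₀ := by
  obtain ⟨L, hL, hLA⟩ := exists_hasFDerivAt_cExp hΛ hinj hp hC hA
  exact ⟨_, hL.comp_hasDerivAt θ hasDerivAt_pSeg, hLA _⟩

end CSegment

theorem statement14_general (c : E → E → ℝ) (Ω Λ : Set E) (hΩ : IsOpen Ω) (hΛ : IsOpen Λ)
    (h0 : A0 c Ω Λ) (h1 : A1 c Ω Λ) (h2 : A2 c Ω Λ)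
    (xm : E) (hxm : xm ∈ Ω) (y₀ : E) (y₁ : E)
    (hseg : segInTarget c Λ xm y₀ y₁) (θ : ℝ) (hθ : θ ∈ Set.Icc (0:ℝ) 1)
    (yθ : E) (hyθ : yθ = ySeg c Λ xm y₀ y₁ θ)
    (qθ : E) (hqθ : qθ = negGradY c xm yθ)
    (ydot : E) (hydot : ydot = deriv (fun θ' => ySeg c Λ xm y₀ y₁ θ') θ)
    (xw : E → E) (hxw : ∀ w : E, xw w = cExp (cStar c) Ω yθ (qθ + w))
    (pdot : E → E)
    (hpdot : ∀ x : E, pdot x = deriv (fun θ' => negGradX c x (ySeg c Λ xm y₀ y₁ θ')) θ) :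
    (∀ w : E, ⟪w, ydot⟫ = 0 → qθ + w ∈ cExpDom (cStar c) Ω yθ →
      ∀ η : E, ⟪η, ydot⟫ = 0 →
        ⟪pdot (xw w), fderiv ℝ xw w η⟫ = 0) ∧
    (qθ ∈ cExpDom (cStar c) Ω yθ →
      ∀ η : E, ⟪η, ydot⟫ = 0 →
        ⟪negGradX c xm y₁ - negGradX c xm y₀, fderiv ℝ xw 0 η⟫ = 0) := by
  have hC : ∀ x ∈ Ω, ∀ y ∈ Λ, ContDiffAt ℝ 2 (uncurry c) (x, y) :=
    fun x hx y hy => h0.contDiffAt hΩ hΛ hx hy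
  have hyθΛ : yθ ∈ Λ := hyθ ▸ cExp_mem (hseg θ hθ)
  obtain ⟨v, hv, hAv⟩ := exists_hasDerivAt_ySeg hΛ ((h1.1 xm hxm).mono subset_closure)
    (hseg θ hθ) (hyθ ▸ contDiffAt_negGradX (hC xm hxm yθ hyθΛ))
    (hyθ ▸ h2 xm (subset_closure hxm) yθ (subset_closure hyθΛ))
  rw [← hyθ] at hAv
  have hpdot_eq : ∀ x ∈ Ω, pdot x = fderiv ℝ (fun y => negGradX c x y) yθ ydot := by
    intro x hx
    have hA := ((contDiffAt_negGradX (hC x hx yθ hyθΛ)).differentiableAt one_ne_zero).hasFDerivAt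
    rw [hyθ] at hA
    rw [hpdot, hydot, hv.deriv, hyθ]
    exact (hA.comp_hasDerivAt θ hv).deriv
  have hinjY : InjOn (fun x => negGradY c x yθ) Ω := (h1.2 yθ hyθΛ).mono subset_closure
  have hortho : ∀ w : E, qθ + w ∈ cExpDom (cStar c) Ω yθ →
      ∀ η : E, ⟪η, ydot⟫ = 0 → ⟪pdot (xw w), fderiv ℝ xw w η⟫ = 0 := by
    intro w hw η hη
    have hx : xw w ∈ Ω := hxw w ▸ cExp_mem hw
    obtain ⟨L, hL, hAL⟩ := exists_hasFDerivAt_cExp_cStar hΩ hinjY hw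
      (hxw w ▸ hC _ hx yθ hyθΛ) (hxw w ▸ h2 _ (subset_closure hx) yθ (subset_closure hyθΛ))
    have hderiv : fderiv ℝ xw w = L := by
      rw [funext hxw]
      exact (hL.comp w ((hasFDerivAt_id w).const_add qθ)).fderiv
    rw [hpdot_eq _ hx, hderiv, hxw w, hAL, real_inner_comm, hη]
  refine ⟨fun w _ => hortho w, fun hq η hη => ?_⟩
  have hxw0 : xw 0 = xm := by
    rw [hxw, add_zero, hqθ]
    exact cExp_negGradX (c := cStar c) hinjY hxm
  have := hortho 0 (by simpa using hq) η hη
  rwa [hxw0, hpdot_eq xm hxm, hydot, hv.deriv, hAv] at this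

theorem statement14 (c : E → E → ℝ) (Ω Λ : Set E) (hΩ : IsOpen Ω) (hΛ : IsOpen Λ)
    (h0 : A0 c Ω Λ) (h1 : A1 c Ω Λ) (h2 : A2 c Ω Λ)
    (xm : E) (hxm : xm ∈ Ω) (y₀ : E) (hy₀ : y₀ ∈ Λ) (y₁ : E) (hy₁ : y₁ ∈ Λ)
    (hseg : segInTarget c Λ xm y₀ y₁) (θ : ℝ) (hθ : θ ∈ Set.Icc (0:ℝ) 1)
    (yθ : E) (hyθ : yθ = ySeg c Λ xm y₀ y₁ θ)
    (qθ : E) (hqθ : qθ = negGradY c xm yθ)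
    (ydot : E) (hydot : ydot = deriv (fun θ' => ySeg c Λ xm y₀ y₁ θ') θ)
    (xw : E → E) (hxw : ∀ w : E, xw w = cExp (cStar c) Ω yθ (qθ + w))
    (pdot : E → E)
    (hpdot : ∀ x : E, pdot x = deriv (fun θ' => negGradX c x (ySeg c Λ xm y₀ y₁ θ')) θ) :
    (∀ w : E, ⟪w, ydot⟫ = 0 → qθ + w ∈ cExpDom (cStar c) Ω yθ →
      ∀ η : E, ⟪η, ydot⟫ = 0 →
        ⟪pdot (xw w), fderiv ℝ xw w η⟫ = 0) ∧
    (qθ ∈ cExpDom (cStar c) Ω yθ →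
      ∀ η : E, ⟪η, ydot⟫ = 0 →
        ⟪negGradX c xm y₁ - negGradX c xm y₀, fderiv ℝ xw 0 η⟫ = 0) :=
  statement14_general c Ω Λ hΩ hΛ h0 h1 h2 xm hxm y₀ y₁ hseg θ hθ yθ hyθ qθ hqθ ydot hydot xw hxw
    pdot hpdot

end
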